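/- For all γ ∈ (0,1), (1 + γ - γ²)/(1 - γ³) < 1/(1-γ); i.e., the best stationary deterministic agent-state policy in Example 1 is strictly worse than the optimal history-dependent policy. -/
import Mathlib

/-- For all `γ ∈ (0,1)`, `(1 + γ - γ²)/(1 - γ³) < 1/(1-γ)`. -/
theorem stmt_11 (γ : ℝ) (hγ0 : 0 < γ) (hγ1 : γ < 1) :
    (1 + γ - γ ^ 2) / (1 - γ ^ 3) < 1 / (1 - γ) := by
  have h1 : 0 < 1 - γ := by linarith
  have h3 : 0 < 1 - γ ^ 3 := by nlinarith [mul_pos hγ0 hγ0, mul_pos (mul_pos hγ0 hγ0) hγ0]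
  rw [div_lt_div_iff₀ h3 h1]
  nlinarith [mul_pos (mul_pos hγ0 hγ0) h1]
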